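/- For every real number b with b ≥ 0 and cosh(b) = (cos(π/8)/sin(π/8))², one has tanh(b/2) = 2^(-1/4). -/
import Mathlib
set_option maxHeartbeats 1000000


theorem tanh_half_octagon_pi_div_eight (b : ℝ) (hb : 0 ≤ b)
    (hcosh : Real.cosh b = (Real.cos (Real.pi / 8) / Real.sin (Real.pi / 8)) ^ 2) :
    Real.tanh (b / 2) = (2 : ℝ) ^ (-(1 : ℝ) / 4) := by
  have hs2 : Real.sqrt 2 ^ 2 = 2 := Real.sq_sqrt (by norm_num)
  have hs0 : (0:ℝ) < Real.sqrt 2 := Real.sqrt_pos.mpr (by norm_num)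
  have hslt : Real.sqrt 2 < 2 := by nlinarith
  have hpi := Real.pi_pos
  have hsinpos : 0 < Real.sin (Real.pi/8) :=
    Real.sin_pos_of_pos_of_lt_pi (by positivity) (by linarith)
  have hcos2 : Real.cos (Real.pi/8) ^ 2 = (2 + Real.sqrt 2)/4 := by
    have h := Real.cos_sq (Real.pi/8)
    rw [show 2*(Real.pi/8) = Real.pi/4 by ring, Real.cos_pi_div_four] at h
    linarith
  have hsin2 : Real.sin (Real.pi/8) ^ 2 = (2 - Real.sqrt 2)/4 := by
    have h := Real.sin_sq (Real.pi/8)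
    rw [hcos2] at h
    linarith
  have hcb : Real.cosh b = 3 + 2*Real.sqrt 2 := by
    rw [hcosh, div_pow, hcos2, hsin2]
    have h4 : (2:ℝ) - Real.sqrt 2 ≠ 0 := by linarith
    field_simp
    nlinarith
  have hch2 : Real.cosh (b/2) ^ 2 = 2 + Real.sqrt 2 := by
    have h := Real.cosh_two_mul (b/2)
    have h2 := Real.cosh_sq (b/2)
    rw [show 2*(b/2) = b by ring, hcb] at h
    linarith
  have hchpos : 0 < Real.cosh (b/2) := Real.cosh_pos _
  have hsh2 : Real.sinh (b/2) ^ 2 = 1 + Real.sqrt 2 := by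
    have h := Real.cosh_sq (b/2)
    rw [hch2] at h; linarith
  have ht2 : Real.tanh (b/2) ^ 2 = Real.sqrt 2 / 2 := by
    rw [Real.tanh_eq_sinh_div_cosh, div_pow, hsh2, hch2]
    rw [div_eq_div_iff (by linarith) (by norm_num)]
    nlinarith
  have hr0 : (0:ℝ) < (2:ℝ) ^ (-(1:ℝ)/4) := Real.rpow_pos_of_pos (by norm_num) _
  have hr2 : ((2:ℝ) ^ (-(1:ℝ)/4)) ^ 2 = Real.sqrt 2 / 2 := by
    rw [← Real.rpow_natCast ((2:ℝ) ^ (-(1:ℝ)/4)) 2, ← Real.rpow_mul (by norm_num)]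
    norm_num
    rw [Real.rpow_neg (by norm_num : (0:ℝ) ≤ 2), ← Real.sqrt_eq_rpow]
    rw [eq_div_iff (by norm_num), inv_mul_eq_div, div_eq_iff (by linarith)]
    nlinarith
  have htn : 0 ≤ Real.tanh (b/2) := by
    rw [Real.tanh_eq_sinh_div_cosh]
    have he : Real.exp (-(b/2)) ≤ Real.exp (b/2) := Real.exp_le_exp.mpr (by linarith)
    have hsh : 0 ≤ Real.sinh (b/2) := by rw [Real.sinh_eq]; linarith
    exact div_nonneg hsh (le_of_lt hchpos)
  nlinarith [ht2, hr2, sq_nonneg (Real.tanh (b/2) - (2:ℝ) ^ (-(1:ℝ)/4)),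
    sq_nonneg (Real.tanh (b/2) + (2:ℝ) ^ (-(1:ℝ)/4))]
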